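/- arXiv:2006.10030 — 6 statements merged into one kernel-verified Lean document; each statement's English description precedes it below -/
import Mathlib

section
/- Desnanot–Jacobi identity: for any X ∈ ℝ^{n×n} with n ≥ 2, det(X) · det(X_{(2:n-1),(2:n-1)}) = det(X_{(1:n-1),(1:n-1)}) · det(X_{(2:n),(2:n)}) − det(X_{(1:n-1),(2:n)}) · det(X_{(2:n),(1:n-1)}), where X_{I,J} denotes the submatrix of X with rows I and columns J. -/
open Matrix Polynomial

private def djMap (n : ℕ) : Fin 2 ⊕ Fin n → Fin (n + 2) :=
  Sum.elim ![0, Fin.last (n + 1)] fun i => i.castSucc.succ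

private lemma djMap_inl_zero (n : ℕ) : djMap n (Sum.inl 0) = 0 := rfl
private lemma djMap_inl_one (n : ℕ) : djMap n (Sum.inl 1) = Fin.last (n + 1) := rfl
private lemma djMap_inr (n : ℕ) (i : Fin n) : djMap n (Sum.inr i) = i.castSucc.succ := rfl

private lemma djMap_injective (n : ℕ) : Function.Injective (djMap n) := by
  intro x y h
  have h' := congrArg Fin.val h
  rcases x with i | i <;> rcases y with j | j
  · fin_cases i <;> fin_cases j <;> simp_all [djMap] <;> omega
  · exfalso; fin_cases i <;> simp [djMap] at h' <;> omega
  · exfalso; fin_cases j <;> simp [djMap] at h' <;> omega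
  · simp only [djMap, Sum.elim_inr, Fin.val_succ, Fin.coe_castSucc] at h'
    exact congrArg Sum.inr (Fin.ext (by omega))

private noncomputable def djEquiv (n : ℕ) : (Fin 2 ⊕ Fin n) ≃ Fin (n + 2) :=
  Equiv.ofBijective (djMap n)
    ((Fintype.bijective_iff_injective_and_card _).2 ⟨djMap_injective n, by simp [add_comm]⟩)

private lemma dj_det_ne {n : ℕ} (X : Matrix (Fin (n + 2)) (Fin (n + 2)) ℝ) (hX : X.det ≠ 0) :
    X.det * (X.submatrix (fun i : Fin n => i.castSucc.succ)
        (fun i : Fin n => i.castSucc.succ)).det =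
      (X.submatrix (Fin.castSucc) (Fin.castSucc)).det *
        (X.submatrix (Fin.succ) (Fin.succ)).det -
      (X.submatrix (Fin.castSucc) (Fin.succ)).det *
        (X.submatrix (Fin.succ) (Fin.castSucc)).det := by
  classical
  have hl0 : (Fin.last (n + 1) : Fin (n + 2)) ≠ 0 := by
    simp [Fin.ext_iff]
  have hmid0 : ∀ i : Fin n, (i.castSucc.succ : Fin (n + 2)) ≠ 0 := fun i => Fin.succ_ne_zero _
  have hmidl : ∀ i : Fin n, (i.castSucc.succ : Fin (n + 2)) ≠ Fin.last (n + 1) := by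
    intro i h
    have := congrArg Fin.val h
    simp at this
    omega
  set a := X.adjugate with ha
  set B : Matrix (Fin (n + 2)) (Fin (n + 2)) ℝ :=
    Matrix.of fun i j => if j = 0 then a i 0 else if j = Fin.last (n + 1) then a i (Fin.last (n + 1))
      else if i = j then 1 else 0 with hB
  have hce : (⇑(djEquiv n)) = djMap n := rfl
  -- determinant of B
  have hBsub : B.submatrix (djMap n) (djMap n) = Matrix.fromBlocks
      !![a 0 0, a 0 (Fin.last (n + 1)); a (Fin.last (n + 1)) 0,
          a (Fin.last (n + 1)) (Fin.last (n + 1))] 0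
      (Matrix.of fun (i : Fin n) (j : Fin 2) =>
        B (i.castSucc.succ) (![0, Fin.last (n + 1)] j)) 1 := by
    ext i j
    rcases i with i | i <;> rcases j with j | j
    · fin_cases i <;> fin_cases j <;>
        simp [hB, djMap, hl0, hl0.symm]
    · fin_cases i <;>
        simp [hB, djMap, (hmid0 j).symm, (hmidl j).symm, hmid0 j, hmidl j]
    · fin_cases j <;> simp [djMap]
    · simp [hB, djMap, hmid0 j, hmidl j, Matrix.one_apply, Fin.succ_inj, Fin.castSucc_inj]
  have hdetB : B.det = a 0 0 * a (Fin.last (n + 1)) (Fin.last (n + 1)) -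
      a 0 (Fin.last (n + 1)) * a (Fin.last (n + 1)) 0 := by
    rw [← Matrix.det_submatrix_equiv_self (djEquiv n) B, hce, hBsub,
      Matrix.det_fromBlocks_zero₁₂, Matrix.det_one, mul_one, Matrix.det_fin_two_of]
  -- the product X * B
  have hXB : X * B = Matrix.of fun i j =>
      if j = 0 then X.det * (if i = 0 then 1 else 0)
      else if j = Fin.last (n + 1) then X.det * (if i = Fin.last (n + 1) then 1 else 0)
      else X i j := by
    have hmul := Matrix.mul_adjugate X
    ext i j
    by_cases hj0 : j = 0
    · subst hj0
      have h1 : (X * B) i 0 = (X * a) i 0 := by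
        simp [Matrix.mul_apply, hB]
      rw [show ((X * B) i 0 : ℝ) = _ from h1, hmul]
      simp [Matrix.smul_apply, Matrix.one_apply, hl0]
    · by_cases hjl : j = Fin.last (n + 1)
      · subst hjl
        have h1 : (X * B) i (Fin.last (n + 1)) = (X * a) i (Fin.last (n + 1)) := by
          simp [Matrix.mul_apply, hB, hl0]
        rw [show ((X * B) i (Fin.last (n + 1)) : ℝ) = _ from h1, hmul]
        simp [Matrix.smul_apply, Matrix.one_apply, hl0]
      · simp [Matrix.mul_apply, hB, hj0, hjl, mul_ite, Finset.sum_ite_eq']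
  have hXBsub : (X * B).submatrix (djMap n) (djMap n) = Matrix.fromBlocks
      (X.det • (1 : Matrix (Fin 2) (Fin 2) ℝ))
      (Matrix.of fun (i : Fin 2) (j : Fin n) =>
        X (![0, Fin.last (n + 1)] i) (j.castSucc.succ)) 0
      (X.submatrix (fun i : Fin n => i.castSucc.succ) (fun i : Fin n => i.castSucc.succ)) := by
    ext i j
    rcases i with i | i <;> rcases j with j | j
    · fin_cases i <;> fin_cases j <;>
        simp [hXB, djMap, hl0, hl0.symm, Matrix.one_apply, Matrix.smul_apply]
    · fin_cases i <;>
        simp [hXB, djMap, (hmid0 j).symm, (hmidl j).symm, hmid0 j, hmidl j]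
    · fin_cases j <;>
        simp [hXB, djMap, hmid0 i, hmidl i]
    · simp [hXB, djMap, hmid0 j, hmidl j]
  have hdetXB : (X * B).det = X.det ^ 2 *
      (X.submatrix (fun i : Fin n => i.castSucc.succ)
        (fun i : Fin n => i.castSucc.succ)).det := by
    rw [← Matrix.det_submatrix_equiv_self (djEquiv n) (X * B), hce, hXBsub,
      Matrix.det_fromBlocks_zero₂₁, Matrix.det_smul, Matrix.det_one]
    simp [Fintype.card_fin]
  have hcancel : B.det = X.det *
      (X.submatrix (fun i : Fin n => i.castSucc.succ)
        (fun i : Fin n => i.castSucc.succ)).det := by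
    apply mul_left_cancel₀ hX
    rw [← Matrix.det_mul, hdetXB]
    ring
  have ha00 : a 0 0 = (X.submatrix Fin.succ Fin.succ).det := by
    rw [ha, Matrix.adjugate_fin_succ_eq_det_submatrix]
    simp
  have hall : a (Fin.last (n + 1)) (Fin.last (n + 1)) =
      (X.submatrix Fin.castSucc Fin.castSucc).det := by
    rw [ha, Matrix.adjugate_fin_succ_eq_det_submatrix]
    simp
  have ha0l : a 0 (Fin.last (n + 1)) =
      (-1 : ℝ) ^ (n + 1) * (X.submatrix Fin.castSucc Fin.succ).det := by
    rw [ha, Matrix.adjugate_fin_succ_eq_det_submatrix]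
    simp
  have hal0 : a (Fin.last (n + 1)) 0 =
      (-1 : ℝ) ^ (n + 1) * (X.submatrix Fin.succ Fin.castSucc).det := by
    rw [ha, Matrix.adjugate_fin_succ_eq_det_submatrix]
    simp
  have hsign : ((-1 : ℝ) ^ (n + 1)) * ((-1 : ℝ) ^ (n + 1)) = 1 := by
    rw [← pow_add, ← two_mul, pow_mul]
    norm_num
  rw [← hcancel, hdetB, ha00, hall, ha0l, hal0]
  first
  | linear_combination (-((X.submatrix Fin.castSucc Fin.succ).det *
      (X.submatrix Fin.succ Fin.castSucc).det)) * hsign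
  | linear_combination ((X.submatrix Fin.castSucc Fin.succ).det *
      (X.submatrix Fin.succ Fin.castSucc).det) * hsign
  | nlinarith [hsign]

/-- Desnanot–Jacobi identity, stated for matrices of size `n + 2` (so that the
matrix has size at least 2; for `n = 0` the middle determinant is the empty
determinant, equal to 1). -/
theorem desnanot_jacobi {n : ℕ} (X : Matrix (Fin (n + 2)) (Fin (n + 2)) ℝ) :
    X.det * (X.submatrix (fun i : Fin n => i.castSucc.succ)
        (fun i : Fin n => i.castSucc.succ)).det =
      (X.submatrix (Fin.castSucc) (Fin.castSucc)).det *
        (X.submatrix (Fin.succ) (Fin.succ)).det -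
      (X.submatrix (Fin.castSucc) (Fin.succ)).det *
        (X.submatrix (Fin.succ) (Fin.castSucc)).det := by
  classical
  set p : Polynomial ℝ := (-X).charpoly with hp
  have hpne : p ≠ 0 := (Matrix.charpoly_monic (-X)).ne_zero
  have hev : ∀ t : ℝ, p.eval t = (X + t • 1).det := by
    intro t
    have h1 : p.eval t = (Polynomial.evalRingHom t) ((Matrix.charmatrix (-X)).det) := rfl
    rw [h1, RingHom.map_det]
    congr 1
    ext i j
    by_cases h : i = j
    · subst h
      simp [Matrix.charmatrix_apply, Matrix.add_apply, Matrix.smul_apply,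
        Matrix.one_apply_eq]
      ring
    · simp [Matrix.charmatrix_apply, Matrix.diagonal_apply_ne _ h, Matrix.add_apply,
        Matrix.smul_apply, Matrix.one_apply_ne h, h]
  have hdense : Dense {t : ℝ | (X + t • 1).det ≠ 0} := by
    have hfin : {t : ℝ | p.IsRoot t}.Finite := Polynomial.finite_setOf_isRoot hpne
    have hd : Dense {t : ℝ | p.IsRoot t}ᶜ := hfin.countable.dense_compl ℝ
    refine hd.mono fun t ht => ?_
    simp only [Set.mem_compl_iff, Set.mem_setOf_eq, Polynomial.IsRoot] at ht
    simpa [Set.mem_setOf_eq, hev t] using ht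
  have hA : Continuous fun t : ℝ => X + t • (1 : Matrix (Fin (n + 2)) (Fin (n + 2)) ℝ) :=
    continuous_const.add (continuous_id.smul continuous_const)
  have hc1 : Continuous fun t : ℝ => (X + t • 1).det *
      ((X + t • 1).submatrix (fun i : Fin n => i.castSucc.succ)
        (fun i : Fin n => i.castSucc.succ)).det :=
    hA.matrix_det.mul (hA.matrix_submatrix _ _).matrix_det
  have hc2 : Continuous fun t : ℝ =>
      ((X + t • 1).submatrix (Fin.castSucc) (Fin.castSucc)).det *
        ((X + t • 1).submatrix (Fin.succ) (Fin.succ)).det -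
      ((X + t • 1).submatrix (Fin.castSucc) (Fin.succ)).det *
        ((X + t • 1).submatrix (Fin.succ) (Fin.castSucc)).det :=
    ((hA.matrix_submatrix _ _).matrix_det.mul (hA.matrix_submatrix _ _).matrix_det).sub
      ((hA.matrix_submatrix _ _).matrix_det.mul (hA.matrix_submatrix _ _).matrix_det)
  have heq := hc1.ext_on hdense hc2 (fun t ht => dj_det_ne _ ht)
  have h0 := congrFun heq 0
  simpa using h0
end

section
/- If a sequence of vectors x^k ∈ ℝ^n converges to x* ∈ ℝ^n, then lim inf_{k→∞} S(x^k) ≥ S(x*), where S(v) counts the number of sign changes in v after deleting zero entries. -/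
/-!
Near the limit every nonzero coordinate of `x*` keeps its sign in `x^k`. The nonzero entries of
`x*` therefore reappear, with the same signs, as a sublist of the nonzero entries of `x^k`, and
passing to a sublist of a zero-free sequence cannot create sign changes: if `a * c < 0` and
`b ≠ 0`, then `a * b < 0` or `b * c < 0`.
-/

/-- The variation `S(v)`: the number of sign changes of a finite real sequence,
after deleting all zero entries. -/
noncomputable def variation (v : List ℝ) : ℕ :=
  let w := v.filter (fun x => x ≠ 0)
  (w.zip w.tail).countP (fun q => q.1 * q.2 < 0)

open Filter Topology

section SignOfProducts

variable {R : Type*} [CommRing R] [LinearOrder R] [IsStrictOrderedRing R]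

lemma neg_mul_or_mul_neg_of_mul_neg {a b c : R} (hac : a * c < 0) (hb : b ≠ 0) :
    a * b < 0 ∨ b * c < 0 := by
  by_contra! h
  have : 0 ≤ (a * b) * (b * c) := mul_nonneg h.1 h.2
  nlinarith [mul_pos_of_neg_of_neg hac hac, sq_pos_of_ne_zero hb]

lemma mul_neg_iff_of_mul_pos {a b a' b' : R} (ha : 0 < a * a') (hb : 0 < b * b') :
    a * b < 0 ↔ a' * b' < 0 := by
  have h : 0 < (a * b) * (a' * b') := by nlinarith [mul_pos ha hb]
  rcases pos_and_pos_or_neg_and_neg_of_mul_pos h with h | h <;> constructor <;> intro <;> linarith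

end SignOfProducts

noncomputable def signChanges (w : List ℝ) : ℕ :=
  (w.zip w.tail).countP (fun q => q.1 * q.2 < 0)

namespace signChanges

lemma cons_cons (a b : ℝ) (t : List ℝ) :
    signChanges (a :: b :: t) = (if a * b < 0 then 1 else 0) + signChanges (b :: t) := by
  simp only [signChanges, List.tail_cons, List.zip_cons_cons, List.countP_cons, decide_eq_true_eq]
  omega

lemma cons_le_cons_cons (c : ℝ) {a : ℝ} (ha : a ≠ 0) (w : List ℝ) :
    signChanges (c :: w) ≤ signChanges (c :: a :: w) := by
  rw [cons_cons]
  cases w with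
  | nil => simp [signChanges]
  | cons b t =>
    rw [cons_cons, cons_cons]
    have := fun hcb : c * b < 0 => neg_mul_or_mul_neg_of_mul_neg hcb ha
    split_ifs <;> grind

/-- The arbitrary first entry `c` is what makes the induction go through. -/
lemma cons_le_cons_of_sublist (c : ℝ) {u w : List ℝ} (h : u.Sublist w)
    (hw : ∀ a ∈ w, a ≠ 0) : signChanges (c :: u) ≤ signChanges (c :: w) := by
  induction h generalizing c with
  | slnil => rfl
  | @cons u w a _ ih =>
    calc signChanges (c :: u)
        ≤ signChanges (c :: w) := ih c fun b hb => hw b (List.mem_cons_of_mem a hb)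
      _ ≤ signChanges (c :: a :: w) := cons_le_cons_cons c (hw a List.mem_cons_self) w
  | @cons_cons u w a _ ih =>
    rw [cons_cons, cons_cons]
    exact Nat.add_le_add_left (ih a fun b hb => hw b (List.mem_cons_of_mem a hb)) _

lemma le_of_sublist {u w : List ℝ} (h : u.Sublist w) (hw : ∀ a ∈ w, a ≠ 0) :
    signChanges u ≤ signChanges w := by
  have zero_cons (v : List ℝ) : signChanges (0 :: v) = signChanges v := by
    cases v with
    | nil => rfl
    | cons b t => simp [cons_cons]
  simpa only [zero_cons] using cons_le_cons_of_sublist 0 h hw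

lemma map_congr {α : Type*} {l : List α} {f g : α → ℝ}
    (h : ∀ i ∈ l, ∀ j ∈ l, (f i * f j < 0 ↔ g i * g j < 0)) :
    signChanges (l.map f) = signChanges (l.map g) := by
  simp only [signChanges, ← List.map_tail, List.zip_map, List.countP_map]
  refine List.countP_congr fun q hq => ?_
  obtain ⟨h₁, h₂⟩ := List.of_mem_zip hq
  simpa using h q.1 h₁ q.2 (List.mem_of_mem_tail h₂)

end signChanges

lemma variation_eq_signChanges_filter (v : List ℝ) :
    variation v = signChanges (v.filter (· ≠ 0)) := rfl

lemma variation_le_length (v : List ℝ) : variation v ≤ v.length :=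
  calc variation v
      ≤ (v.filter (· ≠ 0)).length := List.countP_le_length.trans (by simp)
    _ ≤ v.length := List.length_filter_le _ _

lemma variation_ofFn_le_of_sign_agree {n : ℕ} {v w : Fin n → ℝ}
    (hvw : ∀ i, v i ≠ 0 → 0 < v i * w i) :
    variation (List.ofFn v) ≤ variation (List.ofFn w) := by
  set support := (List.finRange n).filter (fun i => v i ≠ 0)
  have mem_support {i} (hi : i ∈ support) : v i ≠ 0 := by simpa [support] using hi
  have w_ne_zero : ∀ a ∈ support.map w, a ≠ 0 := by
    intro a ha hwa
    obtain ⟨i, hi, rfl⟩ := List.mem_map.mp ha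
    simpa [hwa] using hvw i (mem_support hi)
  have sublist : (support.map w).Sublist ((List.ofFn w).filter (· ≠ 0)) := by
    have : (support.map w).filter (· ≠ 0) = support.map w :=
      List.filter_eq_self.mpr (by simpa using w_ne_zero)
    rw [← this, List.ofFn_eq_map]
    exact (List.filter_sublist.map w).filter _
  calc variation (List.ofFn v)
      = signChanges (support.map v) := by
        rw [variation_eq_signChanges_filter, List.ofFn_eq_map, List.filter_map]; rfl
    _ = signChanges (support.map w) := signChanges.map_congr fun i hi j hj =>
        mul_neg_iff_of_mul_pos (hvw i (mem_support hi)) (hvw j (mem_support hj))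
    _ ≤ variation (List.ofFn w) :=
        signChanges.le_of_sublist sublist (by simp +contextual)

lemma eventually_sign_agree_of_tendsto {α ι : Type*} [Finite ι] {l : Filter α}
    {f : α → ι → ℝ} {g : ι → ℝ} (hf : Tendsto f l (𝓝 g)) :
    ∀ᶠ a in l, ∀ i, g i ≠ 0 → 0 < g i * f a i := by
  refine eventually_all.mpr fun i => ?_
  by_cases hi : g i = 0
  · exact .of_forall fun _ h => absurd hi h
  · have hlim := (tendsto_pi_nhds.mp hf i).const_mul (g i)
    exact (hlim.eventually (eventually_gt_nhds (mul_self_pos.mpr hi))).mono fun _ h _ => h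

/-- If `x^k → x*` in `ℝⁿ`, then `liminf_k S(x^k) ≥ S(x*)`. -/
theorem liminf_variation_ge {n : ℕ} (x : ℕ → Fin n → ℝ) (xs : Fin n → ℝ)
    (hconv : Filter.Tendsto x Filter.atTop (nhds xs)) :
    variation (List.ofFn xs) ≤
      Filter.liminf (fun k => variation (List.ofFn (x k))) Filter.atTop := by
  have bounded : ∀ k, variation (List.ofFn (x k)) ≤ n := fun k =>
    (variation_le_length _).trans_eq (List.length_ofFn)
  exact le_liminf_of_le (isCoboundedUnder_ge_of_le _ bounded)
    ((eventually_sign_agree_of_tendsto hconv).mono fun _ => variation_ofFn_le_of_sign_agree)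
end

section
/- For the compound system of a diagonalizable LTI system: if g(t) = ∑_{i=1}^n r_i p_i^{t−1} for t ≥ 1 with distinct p_i, then for 2 ≤ j ≤ n the determinant of the Hankel matrix satisfies det(H_g(t,j)) = ∑_{v ∈ I_{n,j}} (∏_{i=1}^j r_{v_i}) · (∏_{(a,b)∈I_{j,2}} (p_{v_a} − p_{v_b})²) · (∏_{i=1}^j p_{v_i})^{t−1}, where the sum ranges over all j-element subsets v = {v₁<…<v_j} of {1,…,n}. -/
/-- The `j × j` Hankel matrix `H_g(t,j)` with `(a,b)` entry `g(t+a+b)`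
(0-based indices, corresponding to `g(t + (a+1) + (b+1) - 2)` for 1-based ones). -/
def hankelMat (g : ℕ → ℝ) (t j : ℕ) : Matrix (Fin j) (Fin j) ℝ :=
  Matrix.of fun a b => g (t + a + b)

/-!
The Hankel matrix factors as `Vᵀ D V` with `V i a = p i ^ a` (an `n × j` Vandermonde matrix)
and `D = diag (r i * p i ^ (t - 1))`. By the Cauchy–Binet formula, `det (Vᵀ (D V))` is the
sum over `j`-subsets `S` of `det (V_S)ᵀ * det ((D V)_S)`, where `_S` keeps the rows in `S`.
This term is `(∏_{i ∈ S} r i p i ^ (t - 1)) * det V_S ^ 2`, and `det V_S` is the Vandermonde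
determinant of the `p i`, `i ∈ S`.
-/

open Finset Matrix Equiv

section LinearOrder

variable {ι : Type*} [LinearOrder ι]

theorem Finset.sum_injective_eq_sum_orderEmbOfFin_comp_perm [Fintype ι] {M : Type*}
    [AddCommMonoid M] {k : ℕ} (f : (Fin k → ι) → M) :
    ∑ F : Fin k → ι with F.Injective, f F =
      ∑ s : {s : Finset ι // s.card = k}, ∑ σ : Perm (Fin k),
        f (s.1.orderEmbOfFin s.2 ∘ σ) := by
  rw [← Fintype.sum_prod_type']
  symm
  refine sum_bij (fun x _ => x.1.1.orderEmbOfFin x.1.2 ∘ x.2) ?_ ?_ ?_ fun _ _ => rfl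
  · rintro ⟨s, σ⟩ -
    simpa using (s.1.orderEmbOfFin s.2).injective.comp σ.injective
  · rintro ⟨⟨s, hs⟩, σ⟩ - ⟨⟨t, ht⟩, τ⟩ - h
    have hst : s = t := by
      have := congrArg Set.range h
      simp only [EquivLike.range_comp, range_orderEmbOfFin] at this
      exact_mod_cast this
    subst hst
    obtain rfl : σ = τ := Equiv.ext fun a => (s.orderEmbOfFin hs).injective (congrFun h a)
    rfl
  · intro F hF
    have hF : F.Injective := (mem_filter.mp hF).2
    have hs : (univ.image F).card = k := by simp [card_image_of_injective _ hF]
    set e := (univ.image F).orderIsoOfFin hs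
    let σ (a : Fin k) : Fin k := e.symm ⟨F a, mem_image_of_mem F (mem_univ a)⟩
    have hσ : σ.Injective := fun a b hab => hF (congrArg Subtype.val (e.symm.injective hab))
    refine ⟨(⟨_, hs⟩, Equiv.ofBijective σ (Finite.injective_iff_bijective.mp hσ)),
      mem_univ _, ?_⟩
    funext a
    change ((univ.image F).orderEmbOfFin hs (e.symm _) : ι) = F a
    rw [← coe_orderIsoOfFin_apply, OrderIso.apply_symm_apply]

theorem Finset.prod_prod_Ioi_orderEmbOfFin {M : Type*} [CommMonoid M] {k : ℕ}
    (s : Finset ι) (h : s.card = k) (f : ι → ι → M) :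
    ∏ a : Fin k, ∏ b ∈ Ioi a, f (s.orderEmbOfFin h a) (s.orderEmbOfFin h b) =
      ∏ x ∈ s, ∏ y ∈ s.filter (fun y => x < y), f x y := by
  set e := s.orderEmbOfFin h
  have hIoi (a : Fin k) : (Ioi a).map e.toEmbedding = s.filter (fun y => e a < y) := by
    ext y
    simp only [mem_map, mem_Ioi, mem_filter, RelEmbedding.coe_toEmbedding]
    constructor
    · rintro ⟨b, hab, rfl⟩
      exact ⟨orderEmbOfFin_mem s h b, e.strictMono hab⟩
    · rintro ⟨hy, hay⟩
      obtain ⟨b, rfl⟩ : y ∈ Set.range e := by rwa [range_orderEmbOfFin]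
      exact ⟨b, e.lt_iff_lt.mp hay, rfl⟩
  calc _ = ∏ a, ∏ y ∈ s.filter (fun y => e a < y), f (e a) y :=
        prod_congr rfl fun a _ => by rw [← hIoi, prod_map]; rfl
    _ = ∏ x ∈ univ.map e.toEmbedding, ∏ y ∈ s.filter (fun y => x < y), f x y :=
        (prod_map univ e.toEmbedding fun x => ∏ y ∈ s.filter (fun y => x < y), f x y).symm
    _ = _ := by rw [map_orderEmbOfFin_univ]

end LinearOrder

namespace Matrix

variable {R ι : Type*} [CommRing R]

theorem det_vandermonde_comp_orderEmbOfFin_sq [LinearOrder ι] {k : ℕ}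
    (p : ι → R) (s : Finset ι) (h : s.card = k) :
    (vandermonde (p ∘ s.orderEmbOfFin h)).det ^ 2 =
      ∏ x ∈ s, ∏ y ∈ s.filter (fun y => x < y), (p x - p y) ^ 2 := by
  rw [det_vandermonde, ← prod_prod_Ioi_orderEmbOfFin s h, ← prod_pow]
  refine prod_congr rfl fun a _ => ?_
  rw [← prod_pow]
  exact prod_congr rfl fun b _ => sub_sq_comm _ _

variable [Fintype ι]

theorem det_mul_eq_sum_det_submatrix_mul_prod {m : Type*} [Fintype m] [DecidableEq m]
    (A : Matrix m ι R) (B : Matrix ι m R) :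
    (A * B).det = ∑ F : m → ι, (A.submatrix id F).det * ∏ i, B (F i) i := by
  simp only [det_apply', mul_apply, prod_univ_sum, mul_sum, Fintype.piFinset_univ, sum_mul]
  rw [Finset.sum_comm]
  refine sum_congr rfl fun F _ => sum_congr rfl fun σ _ => ?_
  simp only [submatrix_apply, id, prod_mul_distrib, mul_assoc]

theorem det_mul_eq_sum_det_submatrix_mul_det_submatrix [LinearOrder ι] {k : ℕ}
    (A : Matrix (Fin k) ι R) (B : Matrix ι (Fin k) R) :
    (A * B).det = ∑ s : {s : Finset ι // s.card = k},
      (A.submatrix id (s.1.orderEmbOfFin s.2)).det *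
        (B.submatrix (s.1.orderEmbOfFin s.2) id).det := by
  classical
  calc (A * B).det = ∑ F : Fin k → ι, (A.submatrix id F).det * ∏ i, B (F i) i :=
        det_mul_eq_sum_det_submatrix_mul_prod A B
    _ = ∑ F : Fin k → ι with F.Injective, (A.submatrix id F).det * ∏ i, B (F i) i := by
        refine (sum_filter_of_ne fun F _ hF => ?_).symm
        contrapose! hF
        obtain ⟨a, b, hab, hne⟩ := Function.not_injective_iff.mp hF
        rw [det_zero_of_column_eq hne fun c => by simp [hab], zero_mul]
    _ = ∑ s : {s : Finset ι // s.card = k}, ∑ σ : Perm (Fin k),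
          (A.submatrix id (s.1.orderEmbOfFin s.2 ∘ σ)).det *
            ∏ i, B (s.1.orderEmbOfFin s.2 (σ i)) i :=
        sum_injective_eq_sum_orderEmbOfFin_comp_perm _
    _ = _ := by
        refine sum_congr rfl fun s _ => ?_
        simp only [det_apply' (B.submatrix _ id), mul_sum]
        refine sum_congr rfl fun σ _ => ?_
        rw [← mul_assoc, mul_comm _ ((Perm.sign σ : ℤ) : R), ← det_permute' σ]
        rfl

theorem det_transpose_mul_diagonal_mul [LinearOrder ι] {k : ℕ}
    (V : Matrix ι (Fin k) R) (c : ι → R) :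
    (Vᵀ * diagonal c * V).det = ∑ s : {s : Finset ι // s.card = k},
      (∏ i ∈ s.1, c i) * (V.submatrix (s.1.orderEmbOfFin s.2) id).det ^ 2 := by
  rw [Matrix.mul_assoc, det_mul_eq_sum_det_submatrix_mul_det_submatrix]
  refine sum_congr rfl fun s _ => ?_
  set e := s.1.orderEmbOfFin s.2
  have hsub : (diagonal c * V).submatrix e id = diagonal (c ∘ e) * V.submatrix e id := by
    ext a b; simp [diagonal_mul]
  have hprod : ∏ a, c (e a) = ∏ i ∈ s.1, c i := by
    rw [← map_orderEmbOfFin_univ s.1 s.2, prod_map]; rfl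
  rw [hsub, det_mul, det_diagonal, ← transpose_submatrix, det_transpose, Function.comp_def, hprod]
  ring

end Matrix

theorem hankelMat_eq_transpose_mul_diagonal_mul {n j t : ℕ} (ht : 1 ≤ t) (r p : Fin n → ℝ) :
    hankelMat (fun s => ∑ i, r i * p i ^ (s - 1)) t j =
      (of fun i (a : Fin j) => p i ^ (a : ℕ))ᵀ * diagonal (fun i => r i * p i ^ (t - 1)) *
        of fun i (b : Fin j) => p i ^ (b : ℕ) := by
  ext a b
  simp only [hankelMat, of_apply, mul_apply (M := _ * _), mul_diagonal, transpose_apply]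
  refine sum_congr rfl fun i _ => ?_
  rw [show t + a + b - 1 = a + (t - 1) + b by omega, pow_add, pow_add]
  ring

theorem det_hankel_compound_general {n j t : ℕ} (ht : 1 ≤ t)
    (r p : Fin n → ℝ) :
    (hankelMat (fun s => ∑ i, r i * p i ^ (s - 1)) t j).det =
      ∑ v : {s : Finset (Fin n) // s.card = j},
        (∏ i ∈ v.1, r i) *
        (∏ a ∈ v.1, ∏ b ∈ v.1.filter (fun b => a < b), (p a - p b) ^ 2) *
        (∏ i ∈ v.1, p i) ^ (t - 1) := by
  rw [hankelMat_eq_transpose_mul_diagonal_mul ht, det_transpose_mul_diagonal_mul]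
  refine sum_congr rfl fun v _ => ?_
  rw [show (of fun i (b : Fin j) => p i ^ (b : ℕ)).submatrix (v.1.orderEmbOfFin v.2) id =
      vandermonde (p ∘ v.1.orderEmbOfFin v.2) from rfl,
    det_vandermonde_comp_orderEmbOfFin_sq, prod_mul_distrib, prod_pow]
  ring

/-- Impulse response of the `j`-th compound system of a diagonalizable LTI
system `g(t) = ∑ r_i p_i^{t-1}`: for `2 ≤ j ≤ n`,
`det H_g(t,j) = ∑_{|v| = j} (∏_{i∈v} r_i) (∏_{a<b ∈ v} (p_a - p_b)²) (∏_{i∈v} p_i)^{t-1}`. -/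
theorem det_hankel_compound {n j t : ℕ} (ht : 1 ≤ t) (hj2 : 2 ≤ j) (hjn : j ≤ n)
    (r p : Fin n → ℝ) :
    (hankelMat (fun s => ∑ i, r i * p i ^ (s - 1)) t j).det =
      ∑ v : {s : Finset (Fin n) // s.card = j},
        (∏ i ∈ v.1, r i) *
        (∏ a ∈ v.1, ∏ b ∈ v.1.filter (fun b => a < b), (p a - p b) ^ 2) *
        (∏ i ∈ v.1, p i) ^ (t - 1) :=
  det_hankel_compound_general ht r p
end

section
/- If g₁ and g₂ are impulse responses whose Hankel matrices H_{g₁}(t,j) and H_{g₂}(t,j) are positive semidefinite for all t ≥ 1 and 1 ≤ j ≤ k, then the pointwise product g(t) = g₁(t)·g₂(t) also satisfies H_g(t,j) ⪰ 0 for all t ≥ 1 and 1 ≤ j ≤ k. -/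
open Matrix in
theorem hankelMat_mul_eq_hadamard (g₁ g₂ : ℕ → ℝ) (t j : ℕ) :
    hankelMat (fun s => g₁ s * g₂ s) t j = hankelMat g₁ t j ⊙ hankelMat g₂ t j :=
  rfl

/-- If the Hankel matrices of `g₁` and `g₂` are positive semidefinite for all
`t ≥ 1` and `1 ≤ j ≤ k`, then so are those of the pointwise product
`g(t) = g₁(t)·g₂(t)` (Schur product theorem). -/
theorem hankel_kpos_pointwise_mul (k : ℕ) (g₁ g₂ : ℕ → ℝ)
    (h₁ : ∀ t j, 1 ≤ t → 1 ≤ j → j ≤ k → (hankelMat g₁ t j).PosSemidef)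
    (h₂ : ∀ t j, 1 ≤ t → 1 ≤ j → j ≤ k → (hankelMat g₂ t j).PosSemidef) :
    ∀ t j, 1 ≤ t → 1 ≤ j → j ≤ k →
      (hankelMat (fun s => g₁ s * g₂ s) t j).PosSemidef := by
  intro t j ht hj hjk
  rw [hankelMat_mul_eq_hadamard]
  exact (h₁ t j ht hj hjk).hadamard (h₂ t j ht hj hjk)
end

section
/- Hankel–Sylvester identity for compound impulse responses: for any g : ℤ_{≥1} → ℝ and j ≥ 2, defining g_[j](t) := det(H_g(t,j)) with g_[0] ≡ 1, one has g_[j−2](t+2) · g_[j](t) = g_[j−1](t) · g_[j−1](t+2) − g_[j−1](t+1)², for all t ≥ 1. -/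
namespace Matrix

variable {R : Type*} [CommRing R] {k m : Type*} [Fintype k] [DecidableEq k] [Fintype m]
  [DecidableEq m]

theorem det_mul_det_toBlocks₁₁_adjugate (A : Matrix (k ⊕ m) (k ⊕ m) R) :
    A.det * A.adjugate.toBlocks₁₁.det = A.det ^ Fintype.card k * A.toBlocks₂₂.det := by
  have h := mul_adjugate A
  generalize A.adjugate = B at h ⊢
  rw [← fromBlocks_toBlocks A, ← fromBlocks_toBlocks B, fromBlocks_multiply, ← fromBlocks_one,
    fromBlocks_smul, fromBlocks_inj] at h
  have hmul : A * fromBlocks B.toBlocks₁₁ 0 B.toBlocks₂₁ 1 =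
      fromBlocks (A.det • 1) A.toBlocks₁₂ 0 A.toBlocks₂₂ := by
    rw [← fromBlocks_toBlocks A, fromBlocks_multiply]
    simp [h.1, h.2.2.1]
  simpa [det_fromBlocks_zero₁₂, det_fromBlocks_zero₂₁] using congrArg det hmul

theorem det_toBlocks₁₁_adjugate [Nonempty k] (A : Matrix (k ⊕ m) (k ⊕ m) R) :
    A.adjugate.toBlocks₁₁.det = A.det ^ (Fintype.card k - 1) * A.toBlocks₂₂.det := by
  let X := mvPolynomialX (k ⊕ m) (k ⊕ m) ℤ
  suffices X.adjugate.toBlocks₁₁.det = X.det ^ (Fintype.card k - 1) * X.toBlocks₂₂.det by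
    have h := congrArg (MvPolynomial.aeval fun p : (k ⊕ m) × (k ⊕ m) => A p.1 p.2) this
    rw [map_mul, map_pow, AlgHom.map_det, AlgHom.map_det, AlgHom.map_det] at h
    rw [← mvPolynomialX_mapMatrix_aeval ℤ A, ← AlgHom.map_adjugate]
    exact h
  apply mul_left_cancel₀ (det_mvPolynomialX_ne_zero (k ⊕ m) ℤ)
  rw [det_mul_det_toBlocks₁₁_adjugate, ← mul_assoc, ← pow_succ',
    Nat.sub_add_cancel Fintype.card_pos]

variable {n : ℕ}

noncomputable def cornerSumEquiv (n : ℕ) : Fin 2 ⊕ Fin n ≃ Fin (n + 2) :=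
  Equiv.ofBijective (Sum.elim ![0, Fin.last (n + 1)] fun i => i.castSucc.succ) <| by
    refine (Fintype.bijective_iff_injective_and_card _).2 ⟨?_, by simp [add_comm]⟩
    rintro (a | a) (b | b) h
    all_goals (try fin_cases a) <;> (try fin_cases b) <;> simp [Fin.ext_iff] at h ⊢ <;> omega

theorem adjugate_corner_minor_eq (A : Matrix (Fin (n + 2)) (Fin (n + 2)) R) :
    A.adjugate 0 0 * A.adjugate (Fin.last _) (Fin.last _) -
        A.adjugate 0 (Fin.last _) * A.adjugate (Fin.last _) 0 =
      A.det * (A.submatrix (fun i : Fin n => i.castSucc.succ) fun i => i.castSucc.succ).det := by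
  have hcentre : (A.submatrix (cornerSumEquiv n) (cornerSumEquiv n)).toBlocks₂₂ =
      A.submatrix (fun i => i.castSucc.succ) (fun i => i.castSucc.succ) := rfl
  have h := det_toBlocks₁₁_adjugate (A.submatrix (cornerSumEquiv n) (cornerSumEquiv n))
  rw [adjugate_submatrix_equiv_self, det_submatrix_equiv_self, hcentre, det_fin_two] at h
  simpa [toBlocks₁₁, cornerSumEquiv] using h

theorem desnanot_jacobi (A : Matrix (Fin (n + 2)) (Fin (n + 2)) R) :
    A.det * (A.submatrix (fun i : Fin n => i.castSucc.succ) fun i => i.castSucc.succ).det =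
      (A.submatrix Fin.succ Fin.succ).det * (A.submatrix Fin.castSucc Fin.castSucc).det -
        (A.submatrix Fin.succ Fin.castSucc).det * (A.submatrix Fin.castSucc Fin.succ).det := by
  have hsign : ((-1 : R) ^ (n + 1)) ^ 2 = 1 := by rw [← pow_mul, pow_mul', neg_one_sq, one_pow]
  rw [← adjugate_corner_minor_eq]
  simp only [adjugate_fin_succ_eq_det_submatrix, Fin.succAbove_zero, Fin.succAbove_last,
    Fin.val_zero, Fin.val_last, Even.add_self, Even.neg_pow, one_pow, one_mul, pow_zero, add_zero,
    zero_add]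
  linear_combination
    -(A.submatrix Fin.succ Fin.castSucc).det * (A.submatrix Fin.castSucc Fin.succ).det * hsign

end Matrix

theorem hankelMat_submatrix (g : ℕ → ℝ) (t s : ℕ) {m n : ℕ} (r c : Fin m → Fin n)
    (h : ∀ a b, (r a : ℕ) + c b = s + a + b) :
    (hankelMat g t n).submatrix r c = hankelMat g (t + s) m := by
  ext a b
  simp [hankelMat, add_assoc, h]

theorem hankel_sylvester_identity_general (g : ℕ → ℝ) (j t : ℕ) :
    (hankelMat g (t + 2) j).det * (hankelMat g t (j + 2)).det =
      (hankelMat g t (j + 1)).det * (hankelMat g (t + 2) (j + 1)).det -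
        (hankelMat g (t + 1) (j + 1)).det ^ 2 := by
  have h := Matrix.desnanot_jacobi (hankelMat g t (j + 2))
  rw [hankelMat_submatrix g t 2 _ _ fun a b => by simp; omega,
    hankelMat_submatrix g t 2 Fin.succ Fin.succ fun a b => by simp; omega,
    hankelMat_submatrix g t 0 Fin.castSucc Fin.castSucc fun a b => by simp,
    hankelMat_submatrix g t 1 Fin.succ Fin.castSucc fun a b => by simp; omega,
    hankelMat_submatrix g t 1 Fin.castSucc Fin.succ fun a b => by simp; omega, add_zero] at h
  linear_combination h

/-- Hankel–Sylvester identity for the compound impulse responses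
`g_[j](t) := det H_g(t,j)` (with `g_[0] ≡ 1`, the empty determinant):
`g_[j-2](t+2) · g_[j](t) = g_[j-1](t) · g_[j-1](t+2) - g_[j-1](t+1)²`.
Here the size is written `j + 2` so that `j ≥ 2` automatically. -/
theorem hankel_sylvester_identity (g : ℕ → ℝ) (j t : ℕ) (ht : 1 ≤ t) :
    (hankelMat g (t + 2) j).det * (hankelMat g t (j + 2)).det =
      (hankelMat g t (j + 1)).det * (hankelMat g (t + 2) (j + 1)).det -
        (hankelMat g (t + 1) (j + 1)).det ^ 2 :=
  hankel_sylvester_identity_general g j t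
end

section
/- If g : ℤ_{≥1} → ℝ satisfies g_[j−1](t) > 0 and the log-convexity inequality g_[j−1](t)·g_[j−1](t+2) ≥ g_[j−1](t+1)² for all t in an initial range, and g_[k](t) > 0 everywhere, then positivity of the consecutive minors g_[j](t) := det(H_g(t,j)) on [1, 2^{l+k−j}] for all 1 ≤ j ≤ k−1 propagates to positivity on [1, 2^{l+k−j+1}]; by induction, positivity of g_[j](t) for 1 ≤ t ≤ 2^{k−j} and all 1 ≤ j ≤ k−1, together with g_[k] > 0, implies g_[j](t) > 0 for all t ≥ 1 and 1 ≤ j ≤ k−1. -/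
open Matrix

namespace Matrix

variable {R ι : Type*} [CommRing R] [Fintype ι] [DecidableEq ι]

theorem exists_det_submatrix_mul_det_submatrix_eq_det_mul_det_add_sq
    (M : Matrix (ι ⊕ Fin 2) (ι ⊕ Fin 2) R) (hM : Mᵀ = M) (hB : IsUnit M.toBlocks₁₁.det) :
    ∃ x, (M.submatrix (Sum.map id fun _ : Fin 1 => 0) (Sum.map id fun _ : Fin 1 => 0)).det *
        (M.submatrix (Sum.map id fun _ : Fin 1 => 1) (Sum.map id fun _ : Fin 1 => 1)).det =
      M.det * M.toBlocks₁₁.det + x ^ 2 := by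
  let _ := M.toBlocks₁₁.invertibleOfIsUnitDet hB
  set S := M.toBlocks₂₂ - M.toBlocks₂₁ * ⅟M.toBlocks₁₁ * M.toBlocks₁₂ with hS
  have hdet : M.det = M.toBlocks₁₁.det * S.det := by
    conv_lhs => rw [← fromBlocks_toBlocks M]
    exact det_fromBlocks₁₁ ..
  have hdet_border (c : Fin 2) :
      (M.submatrix (Sum.map id fun _ : Fin 1 => c) (Sum.map id fun _ : Fin 1 => c)).det =
        M.toBlocks₁₁.det * S c c := by
    set N := M.submatrix (Sum.map id fun _ : Fin 1 => c) (Sum.map id fun _ : Fin 1 => c)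
    conv_lhs => rw [← fromBlocks_toBlocks N]
    refine (det_fromBlocks₁₁ M.toBlocks₁₁ N.toBlocks₁₂ N.toBlocks₂₁ N.toBlocks₂₂).trans ?_
    rw [det_unique (_ - _)]
    rfl
  have hS_symm : S 0 1 = S 1 0 := by
    have hM' (i j) : M j i = M i j := congrFun (congrFun hM i) j
    have h₁₁ : M.toBlocks₁₁ᵀ = M.toBlocks₁₁ := by ext; apply hM'
    have h₁₂ : M.toBlocks₁₂ᵀ = M.toBlocks₂₁ := by ext; apply hM'
    have h₂₁ : M.toBlocks₂₁ᵀ = M.toBlocks₁₂ := by ext; apply hM'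
    have h₂₂ : M.toBlocks₂₂ᵀ = M.toBlocks₂₂ := by ext; apply hM'
    have hSt : Sᵀ = S := by
      rw [hS, transpose_sub, transpose_mul, transpose_mul, h₂₂, h₁₂, h₂₁,
        invOf_eq_nonsing_inv, transpose_nonsing_inv, h₁₁, Matrix.mul_assoc]
    exact congrFun (congrFun hSt 1) 0
  refine ⟨M.toBlocks₁₁.det * S 0 1, ?_⟩
  rw [hdet, hdet_border, hdet_border, det_fin_two, hS_symm]
  ring

end Matrix

noncomputable def Fin.interiorSumBorderEquiv (m : ℕ) : Fin m ⊕ Fin 2 ≃ Fin (m + 2) :=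
  Equiv.ofBijective (Sum.elim (fun i => i.succ.castSucc) ![0, Fin.last _]) <|
    (Fintype.bijective_iff_injective_and_card _).2 ⟨by
      refine (Fin.castSucc_injective _ |>.comp (Fin.succ_injective _)).sumElim ?_ ?_
      · intro a b; fin_cases a <;> fin_cases b <;> simp [Fin.ext_iff]
      · intro i c; fin_cases c <;> simp [Fin.ext_iff]; omega
      , by simp⟩

noncomputable def Fin.succSumZeroEquiv (m : ℕ) : Fin m ⊕ Fin 1 ≃ Fin (m + 1) :=
  Equiv.ofBijective (Sum.elim Fin.succ fun _ => 0) <|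
    (Fintype.bijective_iff_injective_and_card _).2
      ⟨(Fin.succ_injective _).sumElim (fun _ _ _ => Subsingleton.elim _ _)
        fun _ _ => Fin.succ_ne_zero _, by simp⟩

theorem hankelMat_transpose (g : ℕ → ℝ) (t n : ℕ) : (hankelMat g t n)ᵀ = hankelMat g t n := by
  ext a b
  simp only [transpose_apply, hankelMat, of_apply, add_right_comm]

theorem exists_det_hankelMat_mul_det_hankelMat_eq (g : ℕ → ℝ) (s m : ℕ)
    (hB : (hankelMat g (s + 2) m).det ≠ 0) :
    ∃ x, (hankelMat g s (m + 1)).det * (hankelMat g (s + 2) (m + 1)).det =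
      (hankelMat g s (m + 2)).det * (hankelMat g (s + 2) m).det + x ^ 2 := by
  set e := Fin.interiorSumBorderEquiv m
  set M := (hankelMat g s (m + 2)).submatrix e e
  have hM : Mᵀ = M := by rw [transpose_submatrix, hankelMat_transpose]
  have h₁₁ : M.toBlocks₁₁ = hankelMat g (s + 2) m := by
    ext i j
    simp [M, e, toBlocks₁₁, hankelMat, Fin.interiorSumBorderEquiv]
    ring_nf
  have h₀ : M.submatrix (Sum.map id fun _ : Fin 1 => 0) (Sum.map id fun _ : Fin 1 => 0) =
      (hankelMat g s (m + 1)).submatrix (Fin.succSumZeroEquiv m) (Fin.succSumZeroEquiv m) := by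
    ext (i | i) (j | j) <;>
      simp [M, e, hankelMat, Fin.interiorSumBorderEquiv, Fin.succSumZeroEquiv]
  have h₁ : M.submatrix (Sum.map id fun _ : Fin 1 => 1) (Sum.map id fun _ : Fin 1 => 1) =
      (hankelMat g (s + 2) (m + 1)).submatrix finSumFinEquiv finSumFinEquiv := by
    ext (i | i) (j | j) <;> simp [M, e, hankelMat, Fin.interiorSumBorderEquiv] <;> ring_nf
  obtain ⟨x, hx⟩ := exists_det_submatrix_mul_det_submatrix_eq_det_mul_det_add_sq M hM
    (h₁₁ ▸ hB.isUnit)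
  refine ⟨x, ?_⟩
  rwa [h₀, h₁, h₁₁, det_submatrix_equiv_self, det_submatrix_equiv_self,
    det_submatrix_equiv_self] at hx

theorem det_hankelMat_pos_of_pos (g : ℕ → ℝ) (s m : ℕ)
    (hB : 0 < (hankelMat g (s + 2) m).det) (h₀ : 0 < (hankelMat g s (m + 1)).det)
    (hM : 0 < (hankelMat g s (m + 2)).det) : 0 < (hankelMat g (s + 2) (m + 1)).det := by
  obtain ⟨x, hx⟩ := exists_det_hankelMat_mul_det_hankelMat_eq g s m hB.ne'
  have : 0 < (hankelMat g s (m + 1)).det * (hankelMat g (s + 2) (m + 1)).det := by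
    rw [hx]; positivity
  exact pos_of_mul_pos_right this h₀.le

/-- Propagation of positivity of consecutive Hankel minors: if the compound
impulse responses `g_[j](t) = det H_g(t,j)` are positive for `1 ≤ t ≤ 2^{k-j}`
and all `1 ≤ j ≤ k-1`, and `g_[k](t) > 0` for all `t ≥ 1`, then
`g_[j](t) > 0` for all `t ≥ 1` and `1 ≤ j ≤ k-1`. -/
theorem hankel_minor_positivity_propagation (g : ℕ → ℝ) (k : ℕ)
    (hinit : ∀ j, 1 ≤ j → j ≤ k - 1 → ∀ t, 1 ≤ t → t ≤ 2 ^ (k - j) →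
      0 < (hankelMat g t j).det)
    (hfull : ∀ t, 1 ≤ t → 0 < (hankelMat g t k).det) :
    ∀ j, 1 ≤ j → j ≤ k - 1 → ∀ t, 1 ≤ t → 0 < (hankelMat g t j).det := by
  suffices H : ∀ t, 1 ≤ t → ∀ j, 1 ≤ j → j ≤ k → 0 < (hankelMat g t j).det from
    fun j hj hjk t ht => H t ht j hj (hjk.trans (Nat.sub_le k 1))
  intro t
  induction t using Nat.strong_induction_on with | _ t iht => ?_
  intro ht j
  induction j using Nat.strong_induction_on with | _ j ihj => ?_
  intro hj hjk
  obtain rfl | hjk := hjk.eq_or_lt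
  · exact hfull t ht
  by_cases ht₂ : t ≤ 2
  · exact hinit j hj (by omega) t ht (ht₂.trans (Nat.le_self_pow (by omega) 2))
  obtain ⟨s, rfl⟩ : ∃ s, t = s + 2 := ⟨t - 2, by omega⟩
  obtain ⟨m, rfl⟩ : ∃ m, j = m + 1 := ⟨j - 1, by omega⟩
  refine det_hankelMat_pos_of_pos g s m ?_ (iht s (by omega) (by omega) _ hj hjk.le)
    (iht s (by omega) (by omega) _ (by omega) hjk)
  rcases m.eq_zero_or_pos with rfl | hm
  · simp
  · exact ihj m (by omega) hm (by omega)
end
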